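/- Let 0 ≥ s > −1/6 and −1/2 < b' < 3s/2 − 1/4. Then there exists ε > 0 such that for ξ = Σ_{i=1}^4 ξ_i and τ = Σ_{i=1}^4 τ_i (ξ, ξ_i real, τ, τ_i real), ⟨ξ⟩^{s+1/2−ε} ∏_{i=1}^4 ⟨ξ_i⟩^{−s+ε} ≤ c ( ⟨τ + ξ²⟩^{−b'} + Σ_{i=1}^4 ⟨τ_i − ξ_i²⟩^{−b'} χ_{A_i} ), where A_i = {⟨τ_i − ξ_i²⟩ ≥ ⟨τ + ξ²⟩}. -/
import Mathlib


open scoped BigOperators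

/-- Japanese bracket. -/
noncomputable def jb (x : ℝ) : ℝ := Real.sqrt (1 + x ^ 2)

lemma jb_nonneg (x : ℝ) : 0 ≤ jb x := Real.sqrt_nonneg _

lemma one_le_jb (x : ℝ) : 1 ≤ jb x := by
  rw [jb]
  nlinarith [Real.sq_sqrt (show (0:ℝ) ≤ 1 + x ^ 2 by positivity),
    Real.sqrt_nonneg (1 + x ^ 2), sq_nonneg x]

lemma abs_le_jb (x : ℝ) : |x| ≤ jb x := by
  rw [jb, ← Real.sqrt_sq_eq_abs]
  exact Real.sqrt_le_sqrt (by nlinarith)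

lemma rpow_add_le_aux {x y p : ℝ} (hx : 0 ≤ x) (hy : 0 ≤ y) (hp : 0 ≤ p) (hp1 : p ≤ 1) :
    (x + y) ^ p ≤ x ^ p + y ^ p := by
  lift x to NNReal using hx
  lift y to NNReal using hy
  exact_mod_cast NNReal.rpow_add_le_add_rpow x y hp hp1


/-- Pointwise weight estimate for the quartic nonlinearity `ū⁴` in one dimension: for
`0 ≥ s > −1/6` and `−1/2 < b' < 3s/2 − 1/4` there is `ε > 0` such that for
`ξ = Σᵢ ξᵢ`, `τ = Σᵢ τᵢ`,
`⟨ξ⟩^{s+1/2−ε} ∏ᵢ ⟨ξᵢ⟩^{−s+ε} ≤ c (⟨τ+ξ²⟩^{−b'} + Σᵢ ⟨τᵢ−ξᵢ²⟩^{−b'} χ_{Aᵢ})`,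
where `Aᵢ = {⟨τᵢ−ξᵢ²⟩ ≥ ⟨τ+ξ²⟩}`. -/
theorem quartic_weight_estimate (s b' : ℝ) (hs0 : s ≤ 0) (hs : -(1 / 6 : ℝ) < s)
    (hb'1 : -(1 / 2 : ℝ) < b') (hb'2 : b' < 3 * s / 2 - 1 / 4) :
    ∃ ε > (0 : ℝ), ∃ c > (0 : ℝ), ∀ (ξ τ : Fin 4 → ℝ) (Ξ T : ℝ),
      Ξ = ∑ i, ξ i → T = ∑ i, τ i →
      jb Ξ ^ (s + 1 / 2 - ε) * ∏ i, jb (ξ i) ^ (-s + ε) ≤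
        c * (jb (T + Ξ ^ 2) ^ (-b') +
          ∑ i, if jb (T + Ξ ^ 2) ≤ jb (τ i - ξ i ^ 2) then
            jb (τ i - ξ i ^ 2) ^ (-b') else 0) := by
  set ε : ℝ := 2 * (3 * s / 2 - 1 / 4 - b') / 3 with hε_def
  have hε : 0 < ε := by rw [hε_def]; linarith
  have hb'neg : b' < 0 := by linarith
  have hp0 : (0:ℝ) ≤ -b' := by linarith
  have hp1 : -b' ≤ 1 := by linarith
  have he0 : 0 ≤ s + 1 / 2 - ε := by rw [hε_def]; linarith
  have he1 : 0 ≤ -s + ε := by rw [hε_def]; linarith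
  have hesum : (s + 1 / 2 - ε) + (-s + ε) * 4 = -(2 * b') := by rw [hε_def]; ring
  refine ⟨ε, hε, 5 * 2 ^ (-b'), by positivity, ?_⟩
  intro ξ τ Ξ T hΞ hT
  set L : ℝ := jb (T + Ξ ^ 2) with hL
  set S : ℝ := L + ∑ i, jb (τ i - ξ i ^ 2) with hS
  have hLi_nonneg : ∀ i, (0:ℝ) ≤ jb (τ i - ξ i ^ 2) := fun i => jb_nonneg _
  have hS1 : 1 ≤ S := by
    have := one_le_jb (T + Ξ ^ 2)
    have h0 : 0 ≤ ∑ i, jb (τ i - ξ i ^ 2) :=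
      Finset.sum_nonneg fun i _ => hLi_nonneg i
    rw [hS]; linarith
  have hS0 : (0:ℝ) < S := by linarith
  -- resonance identity
  have key : Ξ ^ 2 + ∑ i, (ξ i) ^ 2 ≤ S := by
    have hid : Ξ ^ 2 + ∑ i, (ξ i) ^ 2 =
        (T + Ξ ^ 2) + ∑ i, ((ξ i) ^ 2 - τ i) := by
      subst hT; rw [Fin.sum_univ_four, Fin.sum_univ_four, Fin.sum_univ_four]; ring
    rw [hid]
    have h1 : (T + Ξ ^ 2) ≤ L := le_trans (le_abs_self _) (abs_le_jb _)
    have h2 : ∑ i, ((ξ i) ^ 2 - τ i) ≤ ∑ i, jb (τ i - ξ i ^ 2) := by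
      refine Finset.sum_le_sum fun i _ => ?_
      calc (ξ i) ^ 2 - τ i ≤ |(ξ i) ^ 2 - τ i| := le_abs_self _
        _ = |τ i - ξ i ^ 2| := abs_sub_comm _ _
        _ ≤ _ := abs_le_jb _
    rw [hS]; linarith
  -- brackets bounded by sqrt (2 S)
  have hbr : ∀ x : ℝ, 1 + x ^ 2 ≤ 2 * S → jb x ≤ Real.sqrt (2 * S) := fun x h =>
    Real.sqrt_le_sqrt h
  have hsum_sq_nonneg : 0 ≤ ∑ i, (ξ i) ^ 2 :=
    Finset.sum_nonneg fun i _ => sq_nonneg _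
  have hΞbr : jb Ξ ≤ Real.sqrt (2 * S) := hbr _ (by nlinarith)
  have hξbr : ∀ i, jb (ξ i) ≤ Real.sqrt (2 * S) := by
    intro i
    refine hbr _ ?_
    have : (ξ i) ^ 2 ≤ ∑ j, (ξ j) ^ 2 :=
      Finset.single_le_sum (fun j _ => sq_nonneg (ξ j)) (Finset.mem_univ i)
    nlinarith
  set R : ℝ := Real.sqrt (2 * S) with hR
  have hR1 : 1 ≤ R := by
    rw [hR, show (1:ℝ) = Real.sqrt 1 by simp]
    exact Real.sqrt_le_sqrt (by linarith)
  have hR0 : 0 < R := by linarith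
  -- bound LHS by R ^ (-(2 b'))
  have step1 : jb Ξ ^ (s + 1 / 2 - ε) * ∏ i, jb (ξ i) ^ (-s + ε) ≤
      R ^ (-(2 * b')) := by
    have h1 : jb Ξ ^ (s + 1 / 2 - ε) ≤ R ^ (s + 1 / 2 - ε) :=
      Real.rpow_le_rpow (jb_nonneg _) hΞbr he0
    have h2 : ∏ i, jb (ξ i) ^ (-s + ε) ≤ ∏ (_ : Fin 4), R ^ (-s + ε) := by
      refine Finset.prod_le_prod (fun i _ => Real.rpow_nonneg (jb_nonneg _) _)
        (fun i _ => Real.rpow_le_rpow (jb_nonneg _) (hξbr i) he1)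
    calc jb Ξ ^ (s + 1 / 2 - ε) * ∏ i, jb (ξ i) ^ (-s + ε)
        ≤ R ^ (s + 1 / 2 - ε) * ∏ (_ : Fin 4), R ^ (-s + ε) := by
          refine mul_le_mul h1 h2 (Finset.prod_nonneg fun i _ =>
            Real.rpow_nonneg (jb_nonneg _) _) (Real.rpow_nonneg (by linarith) _)
      _ = R ^ (-(2 * b')) := by
          rw [Finset.prod_const, Finset.card_univ, Fintype.card_fin,
            ← Real.rpow_natCast (R ^ (-s + ε)) 4, ← Real.rpow_mul hR0.le,
            ← Real.rpow_add hR0]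
          have h4 : (s + 1 / 2 - ε) + (-s + ε) * ((4:ℕ):ℝ) = -(2 * b') := by
            push_cast; rw [hε_def]; ring
          rw [h4]
  -- R ^ (-(2 b')) = 2^(-b') * S^(-b')
  have step2 : R ^ (-(2 * b')) = 2 ^ (-b') * S ^ (-b') := by
    rw [hR, Real.sqrt_eq_rpow, ← Real.rpow_mul (by linarith),
      show 1 / 2 * -(2 * b') = -b' by ring, Real.mul_rpow (by norm_num) hS0.le]
  -- subadditivity
  have step3 : S ^ (-b') ≤ L ^ (-b') + ∑ i, jb (τ i - ξ i ^ 2) ^ (-b') := by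
    rw [hS, Fin.sum_univ_four, Fin.sum_univ_four]
    have hL0 : 0 ≤ L := jb_nonneg _
    calc (L + (jb (τ 0 - ξ 0 ^ 2) + jb (τ 1 - ξ 1 ^ 2) + jb (τ 2 - ξ 2 ^ 2)
          + jb (τ 3 - ξ 3 ^ 2))) ^ (-b')
        ≤ L ^ (-b') + (jb (τ 0 - ξ 0 ^ 2) + jb (τ 1 - ξ 1 ^ 2) + jb (τ 2 - ξ 2 ^ 2)
          + jb (τ 3 - ξ 3 ^ 2)) ^ (-b') :=
          rpow_add_le_aux hL0 (add_nonneg (add_nonneg (add_nonneg (hLi_nonneg 0)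
            (hLi_nonneg 1)) (hLi_nonneg 2)) (hLi_nonneg 3)) hp0 hp1
      _ ≤ L ^ (-b') + ((jb (τ 0 - ξ 0 ^ 2) + jb (τ 1 - ξ 1 ^ 2) + jb (τ 2 - ξ 2 ^ 2)) ^ (-b')
          + jb (τ 3 - ξ 3 ^ 2) ^ (-b')) := by
          have := rpow_add_le_aux (x := jb (τ 0 - ξ 0 ^ 2) + jb (τ 1 - ξ 1 ^ 2)
            + jb (τ 2 - ξ 2 ^ 2)) (y := jb (τ 3 - ξ 3 ^ 2))
            (add_nonneg (add_nonneg (hLi_nonneg 0) (hLi_nonneg 1)) (hLi_nonneg 2))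
            (hLi_nonneg 3) hp0 hp1
          linarith
      _ ≤ L ^ (-b') + (((jb (τ 0 - ξ 0 ^ 2) + jb (τ 1 - ξ 1 ^ 2)) ^ (-b')
          + jb (τ 2 - ξ 2 ^ 2) ^ (-b')) + jb (τ 3 - ξ 3 ^ 2) ^ (-b')) := by
          have := rpow_add_le_aux (x := jb (τ 0 - ξ 0 ^ 2) + jb (τ 1 - ξ 1 ^ 2))
            (y := jb (τ 2 - ξ 2 ^ 2)) (add_nonneg (hLi_nonneg 0) (hLi_nonneg 1))
            (hLi_nonneg 2) hp0 hp1
          linarith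
      _ ≤ L ^ (-b') + (jb (τ 0 - ξ 0 ^ 2) ^ (-b') + jb (τ 1 - ξ 1 ^ 2) ^ (-b')
          + jb (τ 2 - ξ 2 ^ 2) ^ (-b') + jb (τ 3 - ξ 3 ^ 2) ^ (-b')) := by
          have := rpow_add_le_aux (x := jb (τ 0 - ξ 0 ^ 2)) (y := jb (τ 1 - ξ 1 ^ 2))
            (hLi_nonneg 0) (hLi_nonneg 1) hp0 hp1
          linarith
  -- each Li^(-b') ≤ L^(-b') + indicator term
  have step4 : ∀ i, jb (τ i - ξ i ^ 2) ^ (-b') ≤ L ^ (-b') +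
      (if L ≤ jb (τ i - ξ i ^ 2) then jb (τ i - ξ i ^ 2) ^ (-b') else 0) := by
    intro i
    by_cases h : L ≤ jb (τ i - ξ i ^ 2)
    · rw [if_pos h]
      have : (0:ℝ) ≤ L ^ (-b') := Real.rpow_nonneg (jb_nonneg _) _
      linarith
    · rw [if_neg h]
      push_neg at h
      simpa using Real.rpow_le_rpow (hLi_nonneg i) h.le hp0
  -- assemble
  have hite_nonneg : ∀ i, (0:ℝ) ≤
      (if L ≤ jb (τ i - ξ i ^ 2) then jb (τ i - ξ i ^ 2) ^ (-b') else 0) := by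
    intro i
    split
    · exact Real.rpow_nonneg (hLi_nonneg i) _
    · exact le_rfl
  calc jb Ξ ^ (s + 1 / 2 - ε) * ∏ i, jb (ξ i) ^ (-s + ε)
      ≤ R ^ (-(2 * b')) := step1
    _ = 2 ^ (-b') * S ^ (-b') := step2
    _ ≤ 2 ^ (-b') * (L ^ (-b') + ∑ i, jb (τ i - ξ i ^ 2) ^ (-b')) :=
        mul_le_mul_of_nonneg_left step3 (by positivity)
    _ ≤ 2 ^ (-b') * (5 * (L ^ (-b') +
        ∑ i, if L ≤ jb (τ i - ξ i ^ 2) then jb (τ i - ξ i ^ 2) ^ (-b') else 0)) := by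
        refine mul_le_mul_of_nonneg_left ?_ (by positivity)
        have h0 := step4 0; have h1 := step4 1; have h2 := step4 2; have h3 := step4 3
        have n0 := hite_nonneg 0; have n1 := hite_nonneg 1
        have n2 := hite_nonneg 2; have n3 := hite_nonneg 3
        have hLp : (0:ℝ) ≤ L ^ (-b') := Real.rpow_nonneg (jb_nonneg _) _
        rw [Fin.sum_univ_four, Fin.sum_univ_four]
        linarith
    _ = 5 * 2 ^ (-b') * (L ^ (-b') +
        ∑ i, if L ≤ jb (τ i - ξ i ^ 2) then jb (τ i - ξ i ^ 2) ^ (-b') else 0) := by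
        ring
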